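/- Let α₁,…,α₆,ε ∈ ℝ and let (x₁,…,x₅,x̃₁,…,x̃₅) ∈ ℝ¹⁰ satisfy the dCET₂ equations x̃₁ − x₁ = εα₁(x̃₂x₃ + x₂x̃₃), x̃₂ − x₂ = εα₂(x̃₃x₁ + x₃x̃₁), x̃₃ − x₃ = εα₃(x̃₁x₂ + x₁x̃₂) + εα₄(x̃₄x₅ + x₄x̃₅), x̃₄ − x₄ = εα₅(x̃₅x₃ + x₅x̃₃), x̃₅ − x₅ = εα₆(x̃₃x₄ + x₃x̃₄). Assume 1 − ε²α₁α₂x₃² ≠ 0, 1 − ε²α₅α₆x₃² ≠ 0 and the same for x̃₃. Then H₁(ε) = (α₂x₁² − α₁x₂²)/(1 − ε²α₁α₂x₃²) and H₃(ε) = (α₆x₄² − α₅x₅²)/(1 − ε²α₅α₆x₃²) are conserved quantities of dCET₂: H₁(ε)(x̃) = H₁(ε)(x) and H₃(ε)(x̃) = H₃(ε)(x). -/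
import Mathlib


/-- Conserved quantities `H₁(ε)` and `H₃(ε)` of the Hirota–Kimura
discretization dCET₂ of two coupled Euler tops. -/
theorem dCET2_integrals_H1_H3
    (a1 a2 a3 a4 a5 a6 ε x1 x2 x3 x4 x5 xt1 xt2 xt3 xt4 xt5 : ℝ)
    (h1 : xt1 - x1 = ε * a1 * (xt2 * x3 + x2 * xt3))
    (h2 : xt2 - x2 = ε * a2 * (xt3 * x1 + x3 * xt1))
    (h3 : xt3 - x3 = ε * a3 * (xt1 * x2 + x1 * xt2) + ε * a4 * (xt4 * x5 + x4 * xt5))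
    (h4 : xt4 - x4 = ε * a5 * (xt5 * x3 + x5 * xt3))
    (h5 : xt5 - x5 = ε * a6 * (xt3 * x4 + x3 * xt4))
    (hd1 : 1 - ε ^ 2 * a1 * a2 * x3 ^ 2 ≠ 0)
    (hd2 : 1 - ε ^ 2 * a5 * a6 * x3 ^ 2 ≠ 0)
    (hdt1 : 1 - ε ^ 2 * a1 * a2 * xt3 ^ 2 ≠ 0)
    (hdt2 : 1 - ε ^ 2 * a5 * a6 * xt3 ^ 2 ≠ 0) :
    (a2 * xt1 ^ 2 - a1 * xt2 ^ 2) / (1 - ε ^ 2 * a1 * a2 * xt3 ^ 2)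
        = (a2 * x1 ^ 2 - a1 * x2 ^ 2) / (1 - ε ^ 2 * a1 * a2 * x3 ^ 2) ∧
    (a6 * xt4 ^ 2 - a5 * xt5 ^ 2) / (1 - ε ^ 2 * a5 * a6 * xt3 ^ 2)
        = (a6 * x4 ^ 2 - a5 * x5 ^ 2) / (1 - ε ^ 2 * a5 * a6 * x3 ^ 2) := by
  constructor
  · rw [div_eq_div_iff hdt1 hd1]
    linear_combination (a2 * (xt1 + x1) + ε * a1 * a2 * (x3 * xt2 - xt3 * x2)
        - 2 * ε * a1 * a2 * (xt2 * x3 - xt3 * x2)) * h1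
      + (-(a1 * (xt2 + x2)) - ε * a1 * a2 * (x3 * xt1 - xt3 * x1)
        - 2 * ε * a1 * a2 * (x1 * xt3 - xt1 * x3)) * h2
  · rw [div_eq_div_iff hdt2 hd2]
    linear_combination (a6 * (xt4 + x4) + ε * a5 * a6 * (x3 * xt5 - xt3 * x5)
        - 2 * ε * a5 * a6 * (xt5 * x3 - xt3 * x5)) * h4
      + (-(a5 * (xt5 + x5)) - ε * a5 * a6 * (x3 * xt4 - xt3 * x4)
        - 2 * ε * a5 * a6 * (x4 * xt3 - xt4 * x3)) * h5
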